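/- arXiv:2508.01189 — 3 statements merged into one kernel-verified Lean document; each statement's English description precedes it below -/
import Mathlib

section
/- For every real number λ and every positive integer n, ((-1)^{n-1}/n!) · [ (λ-1)(λ-2)⋯(λ-n+1) − (λ+1)(λ+2)⋯(λ+n-1) ] = Σ_{k=1}^{n-1} C(n-1, k-1) · ((-1)^{k-1}/k) · binom(λ+k-1, k-1), where the two products on the left are the falling factorial (λ-1)_{n-1} and the rising factorial ⟨λ+1⟩_{n-1} (both equal to 1 when n = 1). -/
/-!
Put `m = n - 1` and `μ = -λ - 1`. Upper negation `binom(-r, k) = (-1)^k binom(r + k - 1, k)` turns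
`(-1)^i binom(λ + i, i)` into `binom(μ, i)`, and `C(m, i) / (i + 1) = C(m + 1, i + 1) / (m + 1)`, so the
right side is `(m + 1)⁻¹ ∑_{i < m} C(m + 1, i + 1) binom(μ, i)`. By Chu–Vandermonde the same sum over
`i ≤ m` is `binom(μ + m + 1, m)`, and its extra term `i = m` is `binom(μ, m)`. Upper negation once more
identifies `m! binom(μ + m + 1, m)` and `m! binom(μ, m)` with `(-1)^m (λ - 1)_m` and `(-1)^m ⟨λ + 1⟩_m`.
-/

/-- Generalized binomial coefficient `binom(x, k) = x (x-1) ⋯ (x-k+1) / k!` for real `x`. -/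
noncomputable def rchoose (x : ℝ) (k : ℕ) : ℝ :=
  (∏ i ∈ Finset.range k, (x - i)) / (Nat.factorial k)

/-- Falling factorial `(x)_m = x (x-1) ⋯ (x-m+1)`. -/
noncomputable def fallFact (x : ℝ) (m : ℕ) : ℝ := ∏ i ∈ Finset.range m, (x - i)

/-- Rising factorial `⟨x⟩_m = x (x+1) ⋯ (x+m-1)`. -/
noncomputable def riseFact (x : ℝ) (m : ℕ) : ℝ := ∏ i ∈ Finset.range m, (x + i)

open Finset Nat Polynomial

theorem Ring.choose_neg_eq_neg_one_pow_mul {R : Type*} [Ring R] [BinomialRing R] (r : R)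
    (n : ℕ) : Ring.choose (-r) n = (-1) ^ n * Ring.choose (r + n - 1) n := by
  rw [Ring.choose_neg, Units.smul_def, zsmul_eq_mul, Int.cast_negOnePow_natCast]

theorem Ring.choose_add_natCast_succ_eq_sum {R : Type*} [Ring R] [BinomialRing R] (r : R)
    (m : ℕ) :
    Ring.choose (r + (m + 1)) m =
      ∑ i ∈ range (m + 1), ((m + 1).choose (i + 1) : R) * Ring.choose r i := by
  rw [← Nat.cast_add_one, Ring.add_choose_eq _ (Nat.cast_commute _ r).symm,
    Finset.Nat.sum_antidiagonal_eq_sum_range_succ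
      (fun i j => Ring.choose r i * Ring.choose ((m + 1 : ℕ) : R) j)]
  refine sum_congr rfl fun i hi => ?_
  rw [Ring.choose_natCast, ← (Nat.cast_commute _ _).eq, Nat.choose_symm_of_eq_add]
  have := mem_range.1 hi
  omega

theorem fallFact_eq_factorial_mul_choose (x : ℝ) (m : ℕ) :
    fallFact x m = m ! * Ring.choose x m := by
  rw [← nsmul_eq_mul, ← Ring.descPochhammer_eq_factorial_smul_choose, ← aeval_eq_smeval,
    aeval_def, eval₂_eq_eval_map, descPochhammer_map, descPochhammer_eval_eq_prod_range, fallFact]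

theorem rchoose_eq_choose (x : ℝ) (k : ℕ) : rchoose x k = Ring.choose x k := by
  rw [rchoose, ← fallFact, fallFact_eq_factorial_mul_choose,
    mul_div_cancel_left₀ _ (by positivity)]

theorem riseFact_eq_neg_one_pow_mul_fallFact_neg (x : ℝ) (m : ℕ) :
    riseFact x m = (-1) ^ m * fallFact (-x) m := by
  have h := prod_neg (s := range m) (fun i : ℕ => -x - i)
  rw [card_range] at h
  rw [fallFact, ← h, riseFact]
  simp_rw [neg_sub, sub_neg_eq_add, add_comm]

theorem neg_one_pow_mul_fallFact_sub_riseFact (x : ℝ) (m : ℕ) :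
    (-1) ^ m * (fallFact (x - 1) m - riseFact (x + 1) m) =
      m ! * (Ring.choose (-x - 1 + (m + 1)) m - Ring.choose (-x - 1) m) := by
  have hsign : (-1 : ℝ) ^ m * (-1) ^ m = 1 := by rw [← mul_pow, neg_one_mul, neg_neg, one_pow]
  rw [show -x - 1 + (m + 1) = -(x - m) by ring, Ring.choose_neg_eq_neg_one_pow_mul, sub_add_cancel,
    riseFact_eq_neg_one_pow_mul_fallFact_neg, fallFact_eq_factorial_mul_choose,
    fallFact_eq_factorial_mul_choose, neg_add']
  linear_combination (-(m ! * Ring.choose (-x - 1) m)) * hsign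

theorem choose_mul_neg_one_pow_div_mul_rchoose (x : ℝ) (m i : ℕ) :
    (m.choose i : ℝ) * ((-1) ^ i / (i + 1)) * rchoose (x + i) i =
      ((m + 1).choose (i + 1) : ℝ) * Ring.choose (-x - 1) i / (m + 1) := by
  have hchoose : ((m + 1 : ℕ) : ℝ) * m.choose i = (m + 1).choose (i + 1) * (i + 1 : ℕ) := by
    exact_mod_cast Nat.add_one_mul_choose_eq m i
  rw [rchoose_eq_choose, show -x - 1 = -(x + 1) by ring, Ring.choose_neg_eq_neg_one_pow_mul,
    show x + 1 + i - 1 = x + i by ring]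
  push_cast at hchoose
  field_simp
  linear_combination Ring.choose (x + i) i * hchoose

theorem fall_sub_rise_eq_sum_general (lam : ℝ) (n : ℕ) :
    (-1 : ℝ) ^ (n - 1) / (Nat.factorial n) *
        (fallFact (lam - 1) (n - 1) - riseFact (lam + 1) (n - 1)) =
      ∑ k ∈ Finset.Icc 1 (n - 1),
        ((n - 1).choose (k - 1) : ℝ) * ((-1) ^ (k - 1) / k) * rchoose (lam + k - 1) (k - 1) := by
  rcases n with _ | m
  · simp [fallFact, riseFact]
  have hsum := Ring.choose_add_natCast_succ_eq_sum (-lam - 1) m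
  rw [sum_range_succ, Nat.choose_self, Nat.cast_one, one_mul, eq_comm, ← eq_sub_iff_add_eq] at hsum
  have hrhs : ∑ k ∈ Icc 1 m,
      (m.choose (k - 1) : ℝ) * ((-1) ^ (k - 1) / k) * rchoose (lam + k - 1) (k - 1) =
        (Ring.choose (-lam - 1 + (m + 1)) m - Ring.choose (-lam - 1) m) / (m + 1) := by
    rw [← Ico_add_one_right_eq_Icc, sum_Ico_eq_sum_range, Nat.add_sub_cancel, ← hsum, sum_div]
    refine sum_congr rfl fun i _ => ?_
    rw [← choose_mul_neg_one_pow_div_mul_rchoose, Nat.add_sub_cancel_left]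
    push_cast
    ring_nf
  rw [Nat.add_sub_cancel, hrhs, div_mul_eq_mul_div, neg_one_pow_mul_fallFact_sub_riseFact,
    Nat.factorial_succ]
  push_cast
  field_simp

theorem fall_sub_rise_eq_sum (lam : ℝ) (n : ℕ) (hn : 0 < n) :
    (-1 : ℝ) ^ (n - 1) / (Nat.factorial n) *
        (fallFact (lam - 1) (n - 1) - riseFact (lam + 1) (n - 1)) =
      ∑ k ∈ Finset.Icc 1 (n - 1),
        ((n - 1).choose (k - 1) : ℝ) * ((-1) ^ (k - 1) / k) * rchoose (lam + k - 1) (k - 1) :=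
  fall_sub_rise_eq_sum_general lam n
end

section
/- Let (a_n)_{n≥1} and (b_n)_{n≥1} be sequences of real numbers such that for every positive integer n, Σ_{k=1}^{n} C(n,k) (-1)^{k-1} a_k = b_n. Then for all positive integers n and m, Σ_{k=1}^{n} C(n,k) (-1)^{k-1} a_k / k^m = Σ_{1 ≤ k_1 ≤ k_2 ≤ ⋯ ≤ k_m ≤ n} b_{k_1} / (k_1 k_2 ⋯ k_m), where the right-hand sum is over all weakly increasing m-tuples (k_1, …, k_m) of positive integers with k_m ≤ n. -/
/-!
Pascal's rule in the form `C(n+1,k)/k = C(n,k)/k + C(n+1,k)/(n+1)` shows, by induction on `n`,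
that dividing the `k`-th weight of a binomial transform by `k` turns it into the sum over `j ≤ n`
of the `j`-th transform divided by `j`. Applying this `m` times, with weights `a k / k ^ i`, and
splitting a weakly increasing tuple into its largest entry `j` and a tuple bounded by `j`,
produces the nested sum.
-/

open Finset

theorem Fin.monotone_snoc_iff {α : Type*} [Preorder α] {m : ℕ} {s : Fin m → α} {x : α} :
    Monotone (Fin.snoc s x : Fin (m + 1) → α) ↔ Monotone s ∧ ∀ i, s i ≤ x := by
  refine ⟨fun h => ⟨fun i j hij => ?_, fun i => ?_⟩, fun ⟨hs, hx⟩ i j hij => ?_⟩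
  · simpa using h (Fin.castSucc_le_castSucc_iff.2 hij)
  · simpa using h (Fin.castSucc_lt_last i).le
  · induction j using Fin.lastCases with
    | last => cases i using Fin.lastCases <;> simp [hx]
    | cast j =>
      induction i using Fin.lastCases with
      | last => exact absurd hij (Fin.castSucc_lt_last j).not_ge
      | cast i => simpa using hs (Fin.castSucc_le_castSucc_iff.1 hij)

def monotoneTuples (m n : ℕ) : Finset (Fin m → ℕ) :=
  {t ∈ Fintype.piFinset fun _ => Icc 1 n | ∀ i j : Fin m, i ≤ j → t i ≤ t j}

theorem mem_monotoneTuples {m n : ℕ} {t : Fin m → ℕ} :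
    t ∈ monotoneTuples m n ↔ (∀ i, t i ∈ Icc 1 n) ∧ Monotone t := by
  simp only [monotoneTuples, mem_filter, Fintype.mem_piFinset, Monotone]

theorem snoc_mem_monotoneTuples {m n j : ℕ} {s : Fin m → ℕ} :
    (Fin.snoc s j : Fin (m + 1) → ℕ) ∈ monotoneTuples (m + 1) n ↔
      j ∈ Icc 1 n ∧ s ∈ monotoneTuples m j := by
  simp only [mem_monotoneTuples, Fin.monotone_snoc_iff, Fin.forall_fin_succ', Fin.snoc_castSucc,
    Fin.snoc_last, mem_Icc]
  grind

theorem sum_monotoneTuples_succ {M : Type*} [AddCommMonoid M] (m n : ℕ)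
    (f : (Fin (m + 1) → ℕ) → M) :
    ∑ t ∈ monotoneTuples (m + 1) n, f t =
      ∑ j ∈ Icc 1 n, ∑ s ∈ monotoneTuples m j, f (Fin.snoc s j) := by
  rw [sum_sigma']
  symm
  refine sum_bij' (fun p _ => Fin.snoc p.2 p.1) (fun t _ => ⟨t (Fin.last m), Fin.init t⟩)
    ?_ ?_ ?_ ?_ ?_
  · rintro ⟨j, s⟩ hp
    exact snoc_mem_monotoneTuples.2 (mem_sigma.1 hp)
  · intro t ht
    rw [← Fin.snoc_init_self t, snoc_mem_monotoneTuples] at ht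
    exact mem_sigma.2 ht
  · rintro ⟨j, s⟩ _
    simp
  · intro t _
    exact Fin.snoc_init_self t
  · intros; rfl

section Field

variable {K : Type*} [Field K]

theorem Nat.cast_choose_succ_div [CharZero K] (n k : ℕ) (hk : k ≠ 0) :
    ((n + 1).choose k : K) / k = n.choose k / k + (n + 1).choose k / (n + 1 : ℕ) := by
  obtain ⟨k, rfl⟩ := Nat.exists_eq_succ_of_ne_zero hk
  have h : ((n + 1 : ℕ) : K) * n.choose k = ((n + 1).choose (k + 1) : ℕ) * (k + 1 : ℕ) := by
    exact_mod_cast Nat.add_one_mul_choose_eq n k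
  rw [Nat.choose_succ_succ'] at h ⊢
  push_cast at h ⊢
  field_simp
  linear_combination h

theorem sum_Icc_choose_mul_div [CharZero K] (d : ℕ → K) (n : ℕ) :
    ∑ k ∈ Icc 1 n, n.choose k * d k / k =
      ∑ j ∈ Icc 1 n, (∑ k ∈ Icc 1 j, j.choose k * d k) / j := by
  induction n with
  | zero => simp
  | succ n ih =>
    have hsplit : ∀ k ∈ Icc 1 (n + 1), ((n + 1).choose k : K) * d k / k =
        n.choose k * d k / k + (n + 1).choose k * d k / (n + 1 : ℕ) := by
      intro k hk
      rw [mul_div_right_comm, Nat.cast_choose_succ_div n k (by grind)]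
      ring
    rw [sum_congr rfl hsplit, sum_add_distrib, ← sum_div,
      sum_Icc_succ_top (by omega) (fun k => (n.choose k : K) * d k / k), Nat.choose_succ_self,
      ih, sum_Icc_succ_top (by omega) (fun j => (∑ k ∈ Icc 1 j, (j.choose k : K) * d k) / j)]
    simp

theorem sum_monotoneTuples_one_div_prod (b : ℕ → K) (n : ℕ) :
    ∑ t ∈ monotoneTuples 1 n, b (t 0) / ∏ i, (t i : K) = ∑ j ∈ Icc 1 n, b j / j := by
  rw [sum_monotoneTuples_succ]
  refine sum_congr rfl fun j _ => ?_
  simp [monotoneTuples, Fin.snoc]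

theorem sum_monotoneTuples_succ_div_prod (b : ℕ → K) (m n : ℕ) :
    ∑ t ∈ monotoneTuples (m + 2) n, b (t 0) / ∏ i, (t i : K) =
      ∑ j ∈ Icc 1 n, (∑ s ∈ monotoneTuples (m + 1) j, b (s 0) / ∏ i, (s i : K)) / j := by
  rw [sum_monotoneTuples_succ]
  refine sum_congr rfl fun j _ => ?_
  rw [sum_div]
  refine sum_congr rfl fun s _ => ?_
  rw [Fin.prod_univ_castSucc, ← Fin.castSucc_zero, div_div]
  simp only [Fin.snoc_castSucc, Fin.snoc_last]

theorem sum_choose_mul_div_pow_eq_sum_monotoneTuples [CharZero K] (a b : ℕ → K)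
    (h : ∀ n, 1 ≤ n → ∑ k ∈ Icc 1 n, n.choose k * a k = b n) (m n : ℕ) :
    ∑ k ∈ Icc 1 n, n.choose k * a k / (k : K) ^ (m + 1) =
      ∑ t ∈ monotoneTuples (m + 1) n, b (t 0) / ∏ i, (t i : K) := by
  induction m generalizing n with
  | zero =>
    simp only [zero_add, pow_one]
    rw [sum_Icc_choose_mul_div, sum_monotoneTuples_one_div_prod]
    exact sum_congr rfl fun j hj => by rw [h j (mem_Icc.1 hj).1]
  | succ m ih =>
    have hpow : ∀ k ∈ Icc 1 n, (n.choose k : K) * a k / (k : K) ^ (m + 2) =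
        n.choose k * (a k / (k : K) ^ (m + 1)) / k := fun k _ => by ring
    rw [sum_congr rfl hpow, sum_Icc_choose_mul_div, sum_monotoneTuples_succ_div_prod]
    refine sum_congr rfl fun j _ => ?_
    simp only [← mul_div_assoc, ih]

end Field

theorem binomial_transform_div_pow_general (a b : ℕ → ℝ)
    (h : ∀ n : ℕ, 1 ≤ n →
      ∑ k ∈ Finset.Icc 1 n, (n.choose k : ℝ) * (-1) ^ (k - 1) * a k = b n)
    (n m : ℕ) (hm : 0 < m) :
    ∑ k ∈ Finset.Icc 1 n, (n.choose k : ℝ) * (-1) ^ (k - 1) * a k / (k : ℝ) ^ m =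
      ∑ t ∈ Finset.filter (fun t : Fin m → ℕ => ∀ i j : Fin m, i ≤ j → t i ≤ t j)
          (Fintype.piFinset fun _ : Fin m => Finset.Icc 1 n),
        b (t ⟨0, hm⟩) / ∏ i, (t i : ℝ) := by
  obtain ⟨m, rfl⟩ := Nat.exists_eq_add_one_of_ne_zero hm.ne'
  have hsigned : ∀ n, 1 ≤ n →
      ∑ k ∈ Icc 1 n, (n.choose k : ℝ) * ((-1) ^ (k - 1) * a k) = b n := by
    simpa only [mul_assoc] using h
  simp only [mul_assoc]
  exact sum_choose_mul_div_pow_eq_sum_monotoneTuples _ b hsigned m n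

theorem binomial_transform_div_pow (a b : ℕ → ℝ)
    (h : ∀ n : ℕ, 1 ≤ n →
      ∑ k ∈ Finset.Icc 1 n, (n.choose k : ℝ) * (-1) ^ (k - 1) * a k = b n)
    (n m : ℕ) (hn : 1 ≤ n) (hm : 0 < m) :
    ∑ k ∈ Finset.Icc 1 n, (n.choose k : ℝ) * (-1) ^ (k - 1) * a k / (k : ℝ) ^ m =
      ∑ t ∈ Finset.filter (fun t : Fin m → ℕ => ∀ i j : Fin m, i ≤ j → t i ≤ t j)
          (Fintype.piFinset fun _ : Fin m => Finset.Icc 1 n),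
        b (t ⟨0, hm⟩) / ∏ i, (t i : ℝ) :=
  binomial_transform_div_pow_general a b h n m hm
end

section
/- For every real number λ and every positive integer n, the degenerate harmonic number satisfies H_{n,λ} = (1/n!) Σ_{j=1}^{n} C(n,j) d_{n-j,λ} Σ_{k=1}^{j} k! · C(j,k) · (H_{k,λ} − H_{k-1,λ}) · (1)_{j-k,λ}, where d_{m,λ} = m! · Σ_{i=0}^{m} (−1)_{i,λ}/i! are the degenerate derangement numbers and (x)_{i,λ} is the degenerate falling factorial. -/
/-- Degenerate harmonic numbers `H_{n,λ} = ∑_{k=1}^n binom(λ-1, k-1) (-1)^{k-1} / k`,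
with `H_{0,λ} = 0`. -/
noncomputable def degHarmonic (lam : ℝ) (n : ℕ) : ℝ :=
  ∑ k ∈ Finset.Icc 1 n, rchoose (lam - 1) (k - 1) * (-1) ^ (k - 1) / k

/-- Degenerate falling factorial `(x)_{m,λ} = x (x-λ) (x-2λ) ⋯ (x-(m-1)λ)`. -/
noncomputable def dff (x lam : ℝ) (m : ℕ) : ℝ := ∏ i ∈ Finset.range m, (x - i * lam)

/-- Degenerate derangement numbers `d_{m,λ} = m! ∑_{i=0}^m (−1)_{i,λ} / i!`. -/
noncomputable def degDerangement (lam : ℝ) (m : ℕ) : ℝ :=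
  (Nat.factorial m : ℝ) * ∑ i ∈ Finset.range (m + 1), dff (-1) lam i / (Nat.factorial i : ℝ)

open Finset PowerSeries

lemma degHarmonic_zero (lam : ℝ) : degHarmonic lam 0 = 0 := by simp [degHarmonic]

lemma dff_succ (x lam : ℝ) (m : ℕ) : dff x lam (m + 1) = dff x lam m * (x - m * lam) :=
  prod_range_succ _ m

lemma dff_zero_left_of_pos (lam : ℝ) {m : ℕ} (hm : 0 < m) : dff 0 lam m = 0 :=
  prod_eq_zero (mem_range.mpr hm) (by simp)

lemma dff_add (x y lam : ℝ) (n : ℕ) :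
    dff (x + y) lam n =
      ∑ p ∈ antidiagonal n, (n.choose p.1 : ℝ) * (dff x lam p.1 * dff y lam p.2) := by
  induction n with
  | zero => simp [dff]
  | succ n ih =>
    rw [sum_antidiagonal_choose_succ_mul (fun i j => dff x lam i * dff y lam j), dff_succ, ih,
      sum_mul, ← sum_add_distrib]
    refine sum_congr rfl fun p hp => ?_
    have hn : (n : ℝ) = p.1 + p.2 := by exact_mod_cast (mem_antidiagonal.mp hp).symm
    rw [Nat.choose_symm_of_eq_add (mem_antidiagonal.mp hp).symm, dff_succ, dff_succ, hn]
    ring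

lemma sum_Icc_one_eq_sum_range {M : Type*} [AddCommMonoid M] {f : ℕ → M} (hf : f 0 = 0)
    (n : ℕ) :
    ∑ k ∈ Icc 1 n, f k = ∑ k ∈ range (n + 1), f k := by
  refine sum_subset (fun k hk => ?_) fun k hk hk' => ?_
  · simp only [mem_Icc, mem_range] at hk ⊢
    omega
  · obtain rfl : k = 0 := by simp_all
    exact hf

noncomputable def egf (a : ℕ → ℝ) : PowerSeries ℝ := mk fun n => a n / n.factorial

lemma coeff_egf (a : ℕ → ℝ) (n : ℕ) : coeff n (egf a) = a n / n.factorial := coeff_mk _ _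

lemma egf_injective : Function.Injective egf := fun a b h => funext fun n => by
  have := congrArg (coeff n) h
  rwa [coeff_egf, coeff_egf, div_left_inj' (by positivity)] at this

lemma egf_mul_egf (a b : ℕ → ℝ) :
    egf a * egf b =
      egf fun n => ∑ i ∈ range (n + 1), (n.choose i : ℝ) * a i * b (n - i) := by
  ext n
  rw [coeff_mul, coeff_egf, Nat.sum_antidiagonal_eq_sum_range_succ_mk, sum_div]
  refine sum_congr rfl fun i hi => ?_
  have hin : i ≤ n := Nat.lt_succ_iff.mp (mem_range.mp hi)
  simp only [coeff_egf]
  have hchoose : (n.choose i : ℝ) ≠ 0 := Nat.cast_ne_zero.mpr (Nat.choose_pos hin).ne'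
  rw [← Nat.choose_mul_factorial_mul_factorial hin]
  push_cast
  field_simp

lemma egf_factorial_mul (g : ℕ → ℝ) : egf (fun n => n.factorial * g n) = PowerSeries.mk g := by
  ext n
  rw [coeff_egf, coeff_mk]
  field_simp

/-- The degenerate exponential `e_λ^x(t) = ∑ (x)_{n,λ} tⁿ / n!`. -/
noncomputable abbrev degExp (x lam : ℝ) : PowerSeries ℝ := egf (dff x lam)

lemma degExp_mul_degExp (x y lam : ℝ) : degExp x lam * degExp y lam = degExp (x + y) lam := by
  rw [egf_mul_egf]
  congr 1
  funext n
  rw [dff_add, Nat.sum_antidiagonal_eq_sum_range_succ_mk]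
  simp only [mul_assoc]

lemma degExp_zero (lam : ℝ) : degExp 0 lam = 1 := by
  ext n
  rcases n.eq_zero_or_pos with rfl | hn
  · simp [coeff_egf, dff]
  · rw [coeff_egf, dff_zero_left_of_pos lam hn, zero_div, coeff_one, if_neg hn.ne']

lemma egf_degDerangement (lam : ℝ) :
    egf (degDerangement lam) = degExp (-1) lam * PowerSeries.mk 1 := by
  ext n
  rw [coeff_egf, degDerangement, mul_div_cancel_left₀ _ (by positivity), coeff_mul,
    Nat.sum_antidiagonal_eq_sum_range_succ_mk]
  simp [coeff_egf]

/-- Coefficientwise: `∑ᵢ C(n,i) (1)_{i,λ} d_{n-i,λ} = n!`. -/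
lemma degExp_one_mul_egf_degDerangement (lam : ℝ) :
    degExp 1 lam * egf (degDerangement lam) = PowerSeries.mk 1 := by
  rw [egf_degDerangement, ← mul_assoc, degExp_mul_degExp, add_neg_cancel, degExp_zero, one_mul]

lemma mk_mul_mk_one (g : ℕ → ℝ) :
    PowerSeries.mk g * PowerSeries.mk 1 = PowerSeries.mk fun n => ∑ k ∈ range (n + 1), g k := by
  ext n
  rw [coeff_mul, Nat.sum_antidiagonal_eq_sum_range_succ_mk]
  simp

lemma sum_choose_mul_degDerangement_mul_sum (lam : ℝ) (g : ℕ → ℝ) (n : ℕ) :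
    ∑ j ∈ range (n + 1), (n.choose j : ℝ) * degDerangement lam (n - j) *
        ∑ k ∈ range (j + 1),
          (k.factorial : ℝ) * (j.choose k : ℝ) * g k * dff 1 lam (j - k) =
      n.factorial * ∑ k ∈ range (n + 1), g k := by
  set c : ℕ → ℝ := fun j =>
    ∑ k ∈ range (j + 1), (j.choose k : ℝ) * (k.factorial * g k) * dff 1 lam (j - k)
  have hegf_c : egf c = PowerSeries.mk g * degExp 1 lam := by
    rw [← egf_factorial_mul, egf_mul_egf]
  have hegf :
      egf (fun n => ∑ j ∈ range (n + 1), (n.choose j : ℝ) * c j * degDerangement lam (n - j)) =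
        egf fun n => n.factorial * ∑ k ∈ range (n + 1), g k := by
    rw [← egf_mul_egf, hegf_c, mul_assoc, degExp_one_mul_egf_degDerangement, mk_mul_mk_one,
      egf_factorial_mul]
  rw [← congrFun (egf_injective hegf) n]
  refine sum_congr rfl fun j _ => ?_
  have hinner : ∑ k ∈ range (j + 1),
      (k.factorial : ℝ) * (j.choose k : ℝ) * g k * dff 1 lam (j - k) = c j :=
    sum_congr rfl fun k _ => by ring
  rw [hinner]
  ring

theorem degHarmonic_eq_sum_derangement_general (lam : ℝ) (n : ℕ) :
    degHarmonic lam n =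
      (1 / (Nat.factorial n : ℝ)) *
        ∑ j ∈ Finset.Icc 1 n, (n.choose j : ℝ) * degDerangement lam (n - j) *
          ∑ k ∈ Finset.Icc 1 j,
            (Nat.factorial k : ℝ) * (j.choose k : ℝ) *
              (degHarmonic lam k - degHarmonic lam (k - 1)) * dff 1 lam (j - k) := by
  have htelescope :
      ∑ k ∈ range (n + 1), (degHarmonic lam k - degHarmonic lam (k - 1)) = degHarmonic lam n := by
    rw [sum_range_succ', Nat.zero_sub, sub_self, add_zero]
    simpa [degHarmonic_zero] using sum_range_sub (degHarmonic lam) n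
  have hinner (j : ℕ) :
      ∑ k ∈ Icc 1 j, (k.factorial : ℝ) * (j.choose k : ℝ) *
          (degHarmonic lam k - degHarmonic lam (k - 1)) * dff 1 lam (j - k) =
        ∑ k ∈ range (j + 1), (k.factorial : ℝ) * (j.choose k : ℝ) *
          (degHarmonic lam k - degHarmonic lam (k - 1)) * dff 1 lam (j - k) :=
    sum_Icc_one_eq_sum_range (by simp) j
  simp only [hinner]
  rw [sum_Icc_one_eq_sum_range (by simp), sum_choose_mul_degDerangement_mul_sum, htelescope]
  field_simp

theorem degHarmonic_eq_sum_derangement (lam : ℝ) (n : ℕ) (hn : 0 < n) :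
    degHarmonic lam n =
      (1 / (Nat.factorial n : ℝ)) *
        ∑ j ∈ Finset.Icc 1 n, (n.choose j : ℝ) * degDerangement lam (n - j) *
          ∑ k ∈ Finset.Icc 1 j,
            (Nat.factorial k : ℝ) * (j.choose k : ℝ) *
              (degHarmonic lam k - degHarmonic lam (k - 1)) * dff 1 lam (j - k) :=
  degHarmonic_eq_sum_derangement_general lam n
end
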